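/- For symmetric positive definite X, S with ν = (X•S)/n and any nonsingular Q, the centrality measure satisfies d(X,S) = ‖X^{1/2} S X^{1/2} − ν I‖_F ≤ ‖H_Q(XS − νI)‖_F, with equality when Q X S Q⁻¹ is symmetric. -/

import Mathlib

open Matrix

/-- The Frobenius norm of a matrix. -/
noncomputable def frobNorm {n m : ℕ} (A : Matrix (Fin n) (Fin m) ℝ) : ℝ :=
  Real.sqrt (∑ i, ∑ j, (A i j) ^ 2)

/-- The positive semidefinite square root (removed from Mathlib; restored with its old definition). -/
noncomputable def Matrix.PosSemidef.sqrt {n : Type*} {𝕜 : Type*} [Fintype n] [RCLike 𝕜] [PartialOrder 𝕜]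
    [DecidableEq n] {A : Matrix n n 𝕜} (hA : A.PosSemidef) : Matrix n n 𝕜 :=
  hA.1.eigenvectorUnitary.1 * diagonal ((↑) ∘ (√·) ∘ hA.1.eigenvalues) *
    (star hA.1.eigenvectorUnitary : Matrix n n 𝕜)

lemma psd_sqrt_mul_self {n : ℕ} {A : Matrix (Fin n) (Fin n) ℝ} (hA : A.PosSemidef) :
    hA.sqrt * hA.sqrt = A := by
  have hU : (star hA.1.eigenvectorUnitary : Matrix (Fin n) (Fin n) ℝ) *
      (hA.1.eigenvectorUnitary : Matrix (Fin n) (Fin n) ℝ) = 1 :=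
    Matrix.UnitaryGroup.star_mul_self _
  have hD : diagonal ((RCLike.ofReal : ℝ → ℝ) ∘ (√·) ∘ hA.1.eigenvalues) * diagonal ((RCLike.ofReal : ℝ → ℝ) ∘ (√·) ∘ hA.1.eigenvalues)
      = diagonal (RCLike.ofReal ∘ hA.1.eigenvalues : Fin n → ℝ) := by
    rw [diagonal_mul_diagonal]
    congr 1
    funext i
    simp [Real.mul_self_sqrt (hA.eigenvalues_nonneg i)]
  conv_rhs => rw [hA.1.spectral_theorem]
  simp only [Matrix.PosSemidef.sqrt]
  rw [Unitary.conjStarAlgAut_apply]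
  calc _ = (hA.1.eigenvectorUnitary : Matrix (Fin n) (Fin n) ℝ) *
        (diagonal ((RCLike.ofReal : ℝ → ℝ) ∘ (√·) ∘ hA.1.eigenvalues) *
        ((star hA.1.eigenvectorUnitary : Matrix (Fin n) (Fin n) ℝ) *
        (hA.1.eigenvectorUnitary : Matrix (Fin n) (Fin n) ℝ)) *
        diagonal ((RCLike.ofReal : ℝ → ℝ) ∘ (√·) ∘ hA.1.eigenvalues)) *
        (star hA.1.eigenvectorUnitary : Matrix (Fin n) (Fin n) ℝ) := by
          simp only [Matrix.mul_assoc]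
    _ = _ := by rw [hU, Matrix.mul_one, hD]

lemma psd_sqrt_isHermitian {n : ℕ} {A : Matrix (Fin n) (Fin n) ℝ} (hA : A.PosSemidef) :
    hA.sqrt.IsHermitian := by
  simp only [Matrix.IsHermitian, Matrix.PosSemidef.sqrt, conjTranspose_mul,
    Matrix.star_eq_conjTranspose, conjTranspose_conjTranspose, diagonal_conjTranspose,
    Matrix.mul_assoc]
  congr 3

section aux

variable {n : ℕ}

/-- trace of B*B as a double sum. -/
lemma trace_mul_self_eq (B : Matrix (Fin n) (Fin n) ℝ) :
    (B * B).trace = ∑ i, ∑ j, B i j * B j i := by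
  simp [Matrix.trace, Matrix.mul_apply, Matrix.diag]

/-- similarity invariance of trace of square. -/
lemma trace_sq_conj (R M P : Matrix (Fin n) (Fin n) ℝ) (h : P * R = 1) :
    ((R * M * P) * (R * M * P)).trace = (M * M).trace := by
  calc ((R * M * P) * (R * M * P)).trace
      = (R * (M * (P * R) * M) * P).trace := by congr 1; noncomm_ring
    _ = (R * (M * M * P)).trace := by rw [h, Matrix.mul_one, Matrix.mul_assoc]
    _ = (M * M * P * R).trace := by rw [Matrix.trace_mul_comm]
    _ = (M * M).trace := by rw [Matrix.mul_assoc, h, Matrix.mul_one]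

end aux

set_option maxHeartbeats 1000000 in
/-- For symmetric positive definite `X, S` with `ν = trace(XS)/n` and nonsingular `Q`,
`d(X,S) ≤ ‖H_Q(XS − νI)‖_F`, with equality when `Q X S Q⁻¹` is symmetric. -/
theorem centrality_measure_le_symmetrization {n : ℕ}
    (X S Q : Matrix (Fin n) (Fin n) ℝ)
    (hX : X.PosDef) (hS : S.PosDef) (hQ : IsUnit Q.det)
    (ν : ℝ) (hν : ν = (X * S).trace / n) :
    (frobNorm (hX.posSemidef.sqrt * S * hX.posSemidef.sqrt
        - ν • (1 : Matrix (Fin n) (Fin n) ℝ))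
      ≤ frobNorm ((1 / 2 : ℝ) •
          (Q * (X * S - ν • (1 : Matrix (Fin n) (Fin n) ℝ)) * Q⁻¹
            + (Q⁻¹)ᵀ * (X * S - ν • (1 : Matrix (Fin n) (Fin n) ℝ))ᵀ * Qᵀ))) ∧
    ((Q * (X * S) * Q⁻¹).IsSymm →
      frobNorm (hX.posSemidef.sqrt * S * hX.posSemidef.sqrt
          - ν • (1 : Matrix (Fin n) (Fin n) ℝ))
        = frobNorm ((1 / 2 : ℝ) •
            (Q * (X * S - ν • (1 : Matrix (Fin n) (Fin n) ℝ)) * Q⁻¹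
              + (Q⁻¹)ᵀ * (X * S - ν • (1 : Matrix (Fin n) (Fin n) ℝ))ᵀ * Qᵀ))) := by
  classical
  set P : Matrix (Fin n) (Fin n) ℝ := hX.posSemidef.sqrt with hPdef
  set M : Matrix (Fin n) (Fin n) ℝ := X * S - ν • 1 with hMdef
  set A : Matrix (Fin n) (Fin n) ℝ := P * S * P - ν • 1 with hAdef
  set N : Matrix (Fin n) (Fin n) ℝ := Q * M * Q⁻¹ with hNdef
  have hPP : P * P = X := psd_sqrt_mul_self hX.posSemidef
  have hPsym : Pᵀ = P := by
    have h : P.IsHermitian := psd_sqrt_isHermitian hX.posSemidef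
    simpa [Matrix.IsHermitian, Matrix.conjTranspose_eq_transpose_of_trivial] using h
  have hSsym : Sᵀ = S := by
    have h := hS.isHermitian
    simpa [Matrix.IsHermitian, Matrix.conjTranspose_eq_transpose_of_trivial] using h
  have hPdetu : IsUnit P.det := by
    have hdd : P.det * P.det = X.det := by rw [← Matrix.det_mul, hPP]
    have hXd : X.det ≠ 0 := ne_of_gt hX.det_pos
    have : P.det ≠ 0 := by
      intro h0; apply hXd; rw [← hdd, h0, mul_zero]
    exact isUnit_iff_ne_zero.mpr this
  have hPinv : P * P⁻¹ = 1 := Matrix.mul_nonsing_inv P hPdetu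
  have hPinv' : P⁻¹ * P = 1 := Matrix.nonsing_inv_mul P hPdetu
  have hQinv : Q * Q⁻¹ = 1 := Matrix.mul_nonsing_inv Q hQ
  have hQinv' : Q⁻¹ * Q = 1 := Matrix.nonsing_inv_mul Q hQ
  -- A = P⁻¹ * M * P
  have h2 : P⁻¹ * (X * S) * P = P * S * P := by
    calc P⁻¹ * (X * S) * P = P⁻¹ * (P * P * S) * P := by rw [hPP]
      _ = (P⁻¹ * P) * (P * S * P) := by noncomm_ring
      _ = P * S * P := by rw [hPinv', Matrix.one_mul]
  have hA_conj : A = P⁻¹ * M * P := by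
    rw [hAdef, hMdef, Matrix.mul_sub, Matrix.sub_mul, h2, Matrix.mul_smul,
      Matrix.mul_one, Matrix.smul_mul, hPinv']
  -- A is symmetric
  have hAsym : Aᵀ = A := by
    rw [hAdef, Matrix.transpose_sub, Matrix.transpose_mul, Matrix.transpose_mul,
      hPsym, hSsym, Matrix.transpose_smul, Matrix.transpose_one, Matrix.mul_assoc]
  have hAsym' : ∀ i j, A i j = A j i := by
    intro i j
    conv_lhs => rw [← hAsym]
    rfl
  -- trace identities
  have htrA : (A * A).trace = (M * M).trace := by
    rw [hA_conj]; exact trace_sq_conj P⁻¹ M P hPinv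
  have htrN : (N * N).trace = (M * M).trace := by
    rw [hNdef]; exact trace_sq_conj Q M Q⁻¹ hQinv'
  -- sum for A
  have hfA : (∑ i, ∑ j, (A i j) ^ 2) = (M * M).trace := by
    rw [← htrA, trace_mul_self_eq]
    refine Finset.sum_congr rfl fun i _ => Finset.sum_congr rfl fun j _ => ?_
    rw [sq, hAsym' i j]
  -- H matrix entries
  set H : Matrix (Fin n) (Fin n) ℝ := (1 / 2 : ℝ) • (N + Nᵀ) with hHdef
  have hH_eq : (1 / 2 : ℝ) •
      (Q * (X * S - ν • (1 : Matrix (Fin n) (Fin n) ℝ)) * Q⁻¹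
        + (Q⁻¹)ᵀ * (X * S - ν • (1 : Matrix (Fin n) (Fin n) ℝ))ᵀ * Qᵀ) = H := by
    rw [hHdef, hNdef, hMdef]
    congr 2
    rw [Matrix.transpose_mul, Matrix.transpose_mul, Matrix.mul_assoc]
  have hHapp : ∀ i j, H i j = (N i j + N j i) / 2 := by
    intro i j
    rw [hHdef]
    simp [Matrix.add_apply, Matrix.smul_apply, Matrix.transpose_apply]
    ring
  -- key pointwise inequality
  have hkey : (M * M).trace ≤ ∑ i, ∑ j, (H i j) ^ 2 := by
    rw [← htrN, trace_mul_self_eq]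
    refine Finset.sum_le_sum fun i _ => Finset.sum_le_sum fun j _ => ?_
    rw [hHapp i j]
    nlinarith [sq_nonneg (N i j - N j i)]
  constructor
  · rw [hH_eq]
    unfold frobNorm
    rw [hfA]
    exact Real.sqrt_le_sqrt hkey
  · intro hsym
    have hNsym : Nᵀ = N := by
      rw [hNdef, hMdef]
      have h1 : Q * (X * S - ν • 1) * Q⁻¹
          = Q * (X * S) * Q⁻¹ - ν • (1 : Matrix (Fin n) (Fin n) ℝ) := by
        rw [Matrix.mul_sub, Matrix.sub_mul]
        congr 1
        rw [Matrix.mul_smul, Matrix.mul_one, Matrix.smul_mul, hQinv]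
      rw [h1, Matrix.transpose_sub, hsym.eq, Matrix.transpose_smul, Matrix.transpose_one]
    have hNsym' : ∀ i j, N i j = N j i := by
      intro i j
      conv_lhs => rw [← hNsym]
      rfl
    rw [hH_eq]
    unfold frobNorm
    rw [hfA]
    congr 1
    rw [← htrN, trace_mul_self_eq]
    refine Finset.sum_congr rfl fun i _ => Finset.sum_congr rfl fun j _ => ?_
    rw [hHapp i j, ← hNsym' i j]
    ring
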